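/- Let ε > 0, α > 0, c ∈ [0,1], and x > 0. With p₀(t) := (x/√(2π))t^{−3/2}e^{−x²/(2t)} and p¹(t) := (1 + ε(cx + (1 − e^{−2αx})(αt − x)/(2αx)))·p₀(t) − ε(α/4)(1 − e^{−2αx})·e^{α²t/2 + αx}·Erfc(x/√(2t) + α√(t/2)), the function t ↦ t·p¹(t) is not Lebesgue integrable on (0, ∞); i.e. the first moment of the perturbed first passage time law is infinite. -/

import Mathlib

/-!
For large `t` the only part of `p¹(t)` that is not `O(t^{-3/2})` is the term of `p₀(t)` with
coefficient `εE(αt - x)/(2αx)`, `E = 1 - e^{-2αx}`, which grows linearly in `t`. The Mills-ratio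
bound `Erfc z ≤ e^{-z²}/(z√π)` at `z = (x + αt)/√(2t)` shows that the subtracted `Erfc` term is at
most this linear term up to `O(t^{-5/2})`. Hence `t p¹(t) ≥ t^{-1/2} g(t)` with
`g(t) → x(1 + εcx)/√(2π) > 0`, and `t^{-1/2}` is not integrable at infinity.
-/

open MeasureTheory

/-- The complementary error function `Erfc(z) = (2/√π) ∫_z^∞ e^{−y²} dy`. -/
noncomputable def Erfc (z : ℝ) : ℝ :=
  (2 / Real.sqrt Real.pi) * ∫ y in Set.Ioi z, Real.exp (-y ^ 2)

open Real Set Filter Topology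

lemma integral_Ioi_mul_exp_neg_sq (z : ℝ) :
    ∫ y in Ioi z, y * exp (-y ^ 2) = exp (-z ^ 2) / 2 := by
  have hint : IntegrableOn (fun y : ℝ => y * exp (-y ^ 2)) (Ioi z) := by
    simpa using (integrable_mul_exp_neg_mul_sq (b := 1) one_pos).integrableOn
  have hderiv : ∀ y ∈ Ici z, HasDerivAt (fun y : ℝ => -exp (-y ^ 2) / 2) (y * exp (-y ^ 2)) y :=
    fun y _ => (((hasDerivAt_pow 2 y).neg.exp).neg.div_const 2).congr_deriv (by simp; ring)
  have hlim : Tendsto (fun y : ℝ => -exp (-y ^ 2) / 2) atTop (𝓝 0) := by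
    have hsq := tendsto_neg_atTop_atBot.comp (tendsto_pow_atTop (α := ℝ) two_ne_zero)
    simpa using (tendsto_exp_atBot.comp hsq).neg.div_const 2
  rw [integral_Ioi_of_hasDerivAt_of_tendsto' hderiv hint hlim]
  ring

/-- The Mills-ratio bound, from `e^{-y²} ≤ (y / z) e^{-y²}` for `y ≥ z`. -/
lemma Erfc_le_exp_neg_sq_div {z : ℝ} (hz : 0 < z) :
    Erfc z ≤ exp (-z ^ 2) / (z * √π) := by
  have hexp : IntegrableOn (fun y : ℝ => exp (-y ^ 2)) (Ioi z) := by
    simpa using (integrable_exp_neg_mul_sq (b := 1) one_pos).integrableOn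
  have hmul : IntegrableOn (fun y : ℝ => y * exp (-y ^ 2) / z) (Ioi z) := by
    simpa using ((integrable_mul_exp_neg_mul_sq (b := 1) one_pos).div_const z).integrableOn
  have hle : ∫ y in Ioi z, exp (-y ^ 2) ≤ ∫ y in Ioi z, y * exp (-y ^ 2) / z := by
    refine setIntegral_mono_on hexp hmul measurableSet_Ioi fun y (hy : z < y) => ?_
    rw [le_div_iff₀ hz, mul_comm]
    exact mul_le_mul_of_nonneg_right hy.le (exp_nonneg _)
  rw [integral_div, integral_Ioi_mul_exp_neg_sq] at hle
  calc Erfc z ≤ (2 / √π) * (exp (-z ^ 2) / 2 / z) :=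
        mul_le_mul_of_nonneg_left hle (by positivity)
    _ = exp (-z ^ 2) / (z * √π) := by field_simp

/-- At `z = (x + αt)/√(2t)` one has `α²t/2 + αx - z² = -x²/(2t)`. -/
lemma exp_mul_Erfc_le {α x t : ℝ} (ht : 0 < t) (hxt : 0 < x + α * t) :
    exp (α ^ 2 * t / 2 + α * x) * Erfc (x / √(2 * t) + α * √(t / 2)) ≤
      2 * √t * exp (-x ^ 2 / (2 * t)) / ((x + α * t) * √(2 * π)) := by
  have h2t : √(2 * t) = √2 * √t := sqrt_mul zero_le_two t
  have ht2 : √(t / 2) = √t / √2 := sqrt_div ht.le 2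
  have h2π : √(2 * π) = √2 * √π := sqrt_mul zero_le_two π
  have hs : √t ^ 2 = t := sq_sqrt ht.le
  have h2 : √2 ^ 2 = 2 := sq_sqrt zero_le_two
  have hz : x / √(2 * t) + α * √(t / 2) = (x + α * t) / (√2 * √t) := by
    rw [h2t, ht2]; field_simp; rw [hs]; ring
  have hexp : α ^ 2 * t / 2 + α * x + -((x + α * t) / (√2 * √t)) ^ 2 = -x ^ 2 / (2 * t) := by
    rw [div_pow, mul_pow, hs, h2]; field_simp; ring
  calc exp (α ^ 2 * t / 2 + α * x) * Erfc (x / √(2 * t) + α * √(t / 2))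
      ≤ exp (α ^ 2 * t / 2 + α * x) *
          (exp (-((x + α * t) / (√2 * √t)) ^ 2) / ((x + α * t) / (√2 * √t) * √π)) := by
        rw [hz]; gcongr; exact Erfc_le_exp_neg_sq_div (by positivity)
    _ = 2 * √t * exp (-x ^ 2 / (2 * t)) / ((x + α * t) * √(2 * π)) := by
        rw [← mul_div_assoc, ← exp_add, hexp, h2π]
        field_simp
        rw [h2]

lemma rpow_mul_le_mul_perturbedDensity {ε α c x E t : ℝ} (hε : 0 ≤ ε) (hα : 0 < α)
    (hE : 0 ≤ E) (hx : 0 < x) (ht : 0 < t) :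
    t ^ (-(1 : ℝ) / 2) * (exp (-x ^ 2 / (2 * t)) *
        (x + ε * c * x ^ 2 - ε * E * x ^ 2 / (2 * α * (x + α * t))) / √(2 * π)) ≤
      t * ((1 + ε * (c * x + E * (α * t - x) / (2 * α * x))) *
          (x / √(2 * π) * t ^ (-(3 : ℝ) / 2) * exp (-x ^ 2 / (2 * t))) -
        ε * (α / 4) * E * exp (α ^ 2 * t / 2 + α * x) * Erfc (x / √(2 * t) + α * √(t / 2))) := by
  have hxt : 0 < x + α * t := by positivity
  have hErfc : ε * (α / 4) * E * exp (α ^ 2 * t / 2 + α * x) *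
        Erfc (x / √(2 * t) + α * √(t / 2)) ≤
      ε * (α / 4) * E * (2 * √t * exp (-x ^ 2 / (2 * t)) / ((x + α * t) * √(2 * π))) := by
    rw [mul_assoc _ (exp _)]
    gcongr
    exact exp_mul_Erfc_le ht hxt
  set u := t ^ (-(1 : ℝ) / 2)
  have h32 : t ^ (-(3 : ℝ) / 2) = u / t := by
    rw [← rpow_sub_one ht.ne']; norm_num
  have hsqrt : √t = t * u := by
    rw [sqrt_eq_rpow, ← rpow_one_add' ht.le (by norm_num)]; norm_num
  rw [hsqrt] at hErfc
  calc u * (exp (-x ^ 2 / (2 * t)) *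
        (x + ε * c * x ^ 2 - ε * E * x ^ 2 / (2 * α * (x + α * t))) / √(2 * π))
      = t * ((1 + ε * (c * x + E * (α * t - x) / (2 * α * x))) *
          (x / √(2 * π) * (u / t) * exp (-x ^ 2 / (2 * t))) -
        ε * (α / 4) * E * (2 * (t * u) * exp (-x ^ 2 / (2 * t)) / ((x + α * t) * √(2 * π)))) := by
        field_simp
        ring
    _ ≤ _ := by
        rw [h32]
        exact mul_le_mul_of_nonneg_left (sub_le_sub_left hErfc _) ht.le

lemma not_integrableOn_Ioi_of_eventually_const_mul_rpow_le {f : ℝ → ℝ} {C r : ℝ} (a : ℝ)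
    (hC : 0 < C) (hr : -1 ≤ r) (hf : ∀ᶠ t in atTop, C * t ^ r ≤ f t) :
    ¬ IntegrableOn f (Ioi a) := by
  intro hint
  obtain ⟨T, hT⟩ := eventually_atTop.1 hf
  set T' := max T (max a 1)
  have hT' : 0 < T' := lt_of_lt_of_le one_pos ((le_max_right a 1).trans (le_max_right _ _))
  have hcont : ContinuousOn (fun t : ℝ => C * t ^ r) (Ioi T') :=
    continuousOn_const.mul (continuousOn_id.rpow_const fun t ht => Or.inl (hT'.trans ht).ne')
  have hpow : IntegrableOn (fun t : ℝ => C * t ^ r) (Ioi T') := by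
    refine (hint.mono_set (Ioi_subset_Ioi ((le_max_left a 1).trans (le_max_right _ _)))).mono'
      (hcont.aestronglyMeasurable measurableSet_Ioi) ?_
    filter_upwards [self_mem_ae_restrict measurableSet_Ioi] with t (ht : T' < t)
    rw [norm_of_nonneg (mul_nonneg hC.le (rpow_nonneg (hT'.trans ht).le r))]
    exact hT t ((le_max_left _ _).trans ht.le)
  rw [IntegrableOn, integrable_const_mul_iff (isUnit_iff_ne_zero.mpr hC.ne'), ← IntegrableOn,
    integrableOn_Ioi_rpow_iff hT'] at hpow
  linarith

lemma tendsto_perturbedDensity_bracket (ε α c x E : ℝ) (hα : 0 < α) :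
    Tendsto (fun t : ℝ => exp (-x ^ 2 / (2 * t)) *
        (x + ε * c * x ^ 2 - ε * E * x ^ 2 / (2 * α * (x + α * t))) / √(2 * π))
      atTop (𝓝 ((x + ε * c * x ^ 2) / √(2 * π))) := by
  have hexp : Tendsto (fun t : ℝ => exp (-x ^ 2 / (2 * t))) atTop (𝓝 1) := by
    simpa [Function.comp_def] using (continuous_exp.tendsto 0).comp
      (tendsto_const_nhds.div_atTop (tendsto_id.const_mul_atTop two_pos))
  have hdecay : Tendsto (fun t : ℝ => ε * E * x ^ 2 / (2 * α * (x + α * t))) atTop (𝓝 0) :=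
    tendsto_const_nhds.div_atTop ((tendsto_atTop_add_const_left _ x
      (tendsto_id.const_mul_atTop hα)).const_mul_atTop (by positivity))
  simpa using (hexp.mul (tendsto_const_nhds.sub hdecay)).div_const (√(2 * π))

theorem perturbed_density_infinite_mean_general
    (ε α c x : ℝ) (hε : 0 < ε) (hα : 0 < α) (hc0 : 0 ≤ c) (hx : 0 < x)
    (p₀ p₁ : ℝ → ℝ)
    (hp₀ : ∀ t : ℝ, 0 < t → p₀ t =
      (x / Real.sqrt (2 * Real.pi)) * t ^ (-(3 : ℝ) / 2) * Real.exp (-x ^ 2 / (2 * t)))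
    (hp₁ : ∀ t : ℝ, 0 < t → p₁ t =
      (1 + ε * (c * x + (1 - Real.exp (-2 * α * x)) * (α * t - x) / (2 * α * x))) * p₀ t -
        ε * (α / 4) * (1 - Real.exp (-2 * α * x)) *
          Real.exp (α ^ 2 * t / 2 + α * x) *
          Erfc (x / Real.sqrt (2 * t) + α * Real.sqrt (t / 2))) :
    ¬ IntegrableOn (fun t : ℝ => t * p₁ t) (Set.Ioi 0) volume := by
  have hE : 0 ≤ 1 - exp (-2 * α * x) := sub_nonneg.mpr (exp_le_one_iff.mpr (by nlinarith))
  have hlim : x / 2 / √(2 * π) < (x + ε * c * x ^ 2) / √(2 * π) := by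
    gcongr
    nlinarith [mul_nonneg (mul_nonneg hε.le hc0) (sq_nonneg x)]
  refine not_integrableOn_Ioi_of_eventually_const_mul_rpow_le 0 (C := x / 2 / √(2 * π))
    (r := -(1 : ℝ) / 2) (by positivity) (by norm_num) ?_
  filter_upwards [(tendsto_perturbedDensity_bracket ε α c x _ hα).eventually (lt_mem_nhds hlim),
    eventually_gt_atTop 0] with t hbracket ht
  rw [hp₁ t ht, hp₀ t ht]
  calc x / 2 / √(2 * π) * t ^ (-(1 : ℝ) / 2)
      ≤ t ^ (-(1 : ℝ) / 2) * (exp (-x ^ 2 / (2 * t)) * (x + ε * c * x ^ 2 -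
          ε * (1 - exp (-2 * α * x)) * x ^ 2 / (2 * α * (x + α * t))) / √(2 * π)) := by
        rw [mul_comm]
        exact mul_le_mul_of_nonneg_left hbracket.le (rpow_nonneg ht.le _)
    _ ≤ _ := rpow_mul_le_mul_perturbedDensity hε.le hα hE hx ht

/-- The first moment of the perturbed FPT law is infinite: `t ↦ t p¹(t)` is not
Lebesgue integrable on `(0, ∞)`. -/
theorem perturbed_density_infinite_mean
    (ε α c x : ℝ) (hε : 0 < ε) (hα : 0 < α) (hc0 : 0 ≤ c) (hc1 : c ≤ 1) (hx : 0 < x)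
    (p₀ p₁ : ℝ → ℝ)
    (hp₀ : ∀ t : ℝ, 0 < t → p₀ t =
      (x / Real.sqrt (2 * Real.pi)) * t ^ (-(3 : ℝ) / 2) * Real.exp (-x ^ 2 / (2 * t)))
    (hp₁ : ∀ t : ℝ, 0 < t → p₁ t =
      (1 + ε * (c * x + (1 - Real.exp (-2 * α * x)) * (α * t - x) / (2 * α * x))) * p₀ t -
        ε * (α / 4) * (1 - Real.exp (-2 * α * x)) *
          Real.exp (α ^ 2 * t / 2 + α * x) *
          Erfc (x / Real.sqrt (2 * t) + α * Real.sqrt (t / 2))) :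
    ¬ IntegrableOn (fun t : ℝ => t * p₁ t) (Set.Ioi 0) volume :=
  perturbed_density_infinite_mean_general ε α c x hε hα hc0 hx p₀ p₁ hp₀ hp₁
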